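/- arXiv:1605.08542 — 8 statements merged into one kernel-verified Lean document; each statement's English description precedes it below -/
import Mathlib

section
/- Let n ≥ 1 and let w_{ij} ≥ 0 for i, j ∈ {0, 1, …, n} with w_{ii} = 0 for all i. Assume that for each i ∈ {1, …, n} the row sum ϖ_i := Σ_{j=0}^{n} w_{ij} is strictly positive, and that for each i ∈ {1, …, n} there exists a finite sequence i = i₀, i₁, …, i_q of indices in {1, …, n} with w_{i_l i_{l+1}} > 0 for all 0 ≤ l < q and w_{i_q 0} > 0 (i.e., the digraph with an edge from j to i whenever w_{ij} > 0 contains a spanning tree rooted at node 0). Define the n×n matrix D by D_{ij} = w_{ij}/ϖ_i for i, j ∈ {1, …, n}. Then ‖Dⁿ‖_∞ < 1, where ‖·‖_∞ denotes the maximum absolute row sum; in particular every complex eigenvalue of D has modulus strictly less than 1. -/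
/-!
The matrix `D` is entrywise nonnegative with row sums `≤ 1`, and the row sum is `< 1` exactly at
the rows `i` with `w i 0 > 0` ("leaky" rows). The row sums of `D ^ k` decrease with `k`, so the
set of rows whose sum in `D ^ k` is `< 1` increases. As long as it is not everything, it grows
strictly at the next step: following the path from a row outside it towards `0`, one meets a row
outside it that is leaky or has a positive entry in a row inside it, and that row has
sum `< 1` in `D ^ (k + 1)`. Hence after `n` steps every row sum is `< 1`. For an eigenvalue `z`,
`z ^ n` is in the spectrum of `D ^ n`, so `‖z‖ ^ n ≤ ‖D ^ n‖_∞ < 1`.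
-/

open Finset

theorem exists_notMem_of_chain {α : Type*} {r : α → α → Prop} {s T : Set α} (c : ℕ → α) (q : ℕ)
    (hc0 : c 0 ∉ T) (hc : ∀ l < q, r (c l) (c (l + 1))) (hq : c q ∈ s) :
    ∃ i ∉ T, i ∈ s ∨ ∃ j ∈ T, r i j := by
  induction q generalizing c with
  | zero => exact ⟨c 0, hc0, .inl hq⟩
  | succ q ih =>
    by_cases hc1 : c 1 ∈ T
    · exact ⟨c 0, hc0, .inr ⟨c 1, hc1, hc 0 q.succ_pos⟩⟩
    · exact ih (fun l => c (l + 1)) hc1 (fun l hl => hc (l + 1) (by omega)) hq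

theorem Finset.eq_univ_of_ssubset_succ {α : Type*} [Fintype α] {S : ℕ → Finset α}
    (hmono : Monotone S) (hgrow : ∀ k, S k ≠ univ → S k ⊂ S (k + 1)) :
    S (Fintype.card α) = univ := by
  have hcard : ∀ k, min k (Fintype.card α) ≤ #(S k) := by
    intro k
    induction k with
    | zero => simp
    | succ k ih =>
      by_cases hk : S k = univ
      · have : S (k + 1) = univ := univ_subset_iff.mp (hk ▸ hmono k.le_succ)
        simp [this]
      · have := card_lt_card (hgrow k hk)
        omega
  exact eq_univ_of_card _ (le_antisymm (card_le_univ _) (by simpa using hcard (Fintype.card α)))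

namespace Matrix

theorem mulVec_one_apply {ι R : Type*} [Fintype ι] [NonAssocSemiring R] (M : Matrix ι ι R)
    (i : ι) : (M *ᵥ 1) i = ∑ j, M i j := by
  simp [mulVec, dotProduct]

variable {ι R : Type*} [Fintype ι] [Ring R] [LinearOrder R] [IsStrictOrderedRing R]
  {A : Matrix ι ι R}

theorem mulVec_mono (hA : ∀ i j, 0 ≤ A i j) {u v : ι → R} (huv : u ≤ v) : A *ᵥ u ≤ A *ᵥ v :=
  fun i => sum_le_sum fun j _ => mul_le_mul_of_nonneg_left (huv j) (hA i j)

theorem mulVec_apply_lt_sum (hA : ∀ i j, 0 ≤ A i j) {v : ι → R} (hv : v ≤ 1) {i j : ι}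
    (hij : 0 < A i j) (hvj : v j < 1) : (A *ᵥ v) i < ∑ j, A i j := by
  rw [← mulVec_one_apply]
  exact sum_lt_sum (fun m _ => mul_le_mul_of_nonneg_left (hv m) (hA i m))
    ⟨j, mem_univ j, mul_lt_mul_of_pos_left hvj hij⟩

variable [DecidableEq ι]

variable (A) in
def deficientRows (k : ℕ) : Finset ι := {i | (A ^ k *ᵥ 1) i < 1}

theorem pow_mulVec_one_le_one (hA : ∀ i j, 0 ≤ A i j) (hrow : ∀ i, ∑ j, A i j ≤ 1) (k : ℕ) :
    A ^ k *ᵥ 1 ≤ 1 := by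
  induction k with
  | zero => simp
  | succ k ih =>
    intro i
    rw [pow_succ', ← mulVec_mulVec]
    exact (mulVec_mono hA ih i).trans ((mulVec_one_apply A i).trans_le (hrow i))

theorem pow_succ_mulVec_one_le (hA : ∀ i j, 0 ≤ A i j) (hrow : ∀ i, ∑ j, A i j ≤ 1) (k : ℕ) :
    A ^ (k + 1) *ᵥ 1 ≤ A ^ k *ᵥ 1 := by
  rw [pow_succ, ← mulVec_mulVec]
  exact mulVec_mono (pow_apply_nonneg hA k) fun i => (mulVec_one_apply A i).trans_le (hrow i)

theorem monotone_deficientRows (hA : ∀ i j, 0 ≤ A i j) (hrow : ∀ i, ∑ j, A i j ≤ 1) :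
    Monotone (deficientRows A) :=
  monotone_nat_of_le_succ fun k i hi => by
    simp only [deficientRows, mem_filter_univ] at hi ⊢
    exact (pow_succ_mulVec_one_le hA hrow k i).trans_lt hi

theorem mem_deficientRows_succ (hA : ∀ i j, 0 ≤ A i j) (hrow : ∀ i, ∑ j, A i j ≤ 1) {k : ℕ}
    {i : ι} (hi : ∑ j, A i j < 1 ∨ ∃ j ∈ deficientRows A k, 0 < A i j) :
    i ∈ deficientRows A (k + 1) := by
  have hle := pow_mulVec_one_le_one hA hrow k
  simp only [deficientRows, mem_filter_univ] at hi ⊢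
  rw [pow_succ', ← mulVec_mulVec]
  rcases hi with hleak | ⟨j, hj, hij⟩
  · exact (mulVec_mono hA hle i).trans_lt ((mulVec_one_apply A i).trans_lt hleak)
  · exact (mulVec_apply_lt_sum hA hle hij hj).trans_le (hrow i)

theorem deficientRows_ssubset_succ (hA : ∀ i j, 0 ≤ A i j) (hrow : ∀ i, ∑ j, A i j ≤ 1)
    (hpath : ∀ i, ∃ (q : ℕ) (c : ℕ → ι), c 0 = i ∧ (∀ l < q, 0 < A (c l) (c (l + 1))) ∧
      ∑ j, A (c q) j < 1)
    {k : ℕ} (hk : deficientRows A k ≠ univ) : deficientRows A k ⊂ deficientRows A (k + 1) := by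
  obtain ⟨i₀, hi₀⟩ := not_forall.mp (mt eq_univ_iff_forall.mpr hk)
  obtain ⟨q, c, rfl, hc, hq⟩ := hpath i₀
  obtain ⟨i, hi, hexit⟩ := exists_notMem_of_chain (r := fun i j => 0 < A i j)
    (s := {i | ∑ j, A i j < 1}) (T := ↑(deficientRows A k)) c q hi₀ hc hq
  exact (ssubset_iff_of_subset (monotone_deficientRows hA hrow k.le_succ)).mpr
    ⟨i, mem_deficientRows_succ hA hrow hexit, hi⟩

theorem sum_pow_card_apply_lt_one (hA : ∀ i j, 0 ≤ A i j) (hrow : ∀ i, ∑ j, A i j ≤ 1)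
    (hpath : ∀ i, ∃ (q : ℕ) (c : ℕ → ι), c 0 = i ∧ (∀ l < q, 0 < A (c l) (c (l + 1))) ∧
      ∑ j, A (c q) j < 1)
    (i : ι) : ∑ j, (A ^ Fintype.card ι) i j < 1 := by
  have hall := eq_univ_of_ssubset_succ (monotone_deficientRows hA hrow)
    fun k => deficientRows_ssubset_succ hA hrow hpath
  have hi : i ∈ deficientRows A (Fintype.card ι) := hall ▸ mem_univ i
  simpa [deficientRows, mulVec_one_apply] using hi

attribute [local instance] Matrix.linftyOpNormedRing Matrix.linftyOpNormedAlgebra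

theorem norm_lt_one_of_mem_spectrum {ι 𝕜 : Type*} [Fintype ι] [DecidableEq ι]
    [NontriviallyNormedField 𝕜] [CompleteSpace 𝕜] {M : Matrix ι ι 𝕜} {m : ℕ}
    (hM : ∀ i, ∑ j, ‖(M ^ m) i j‖ < 1) {z : 𝕜} (hz : z ∈ spectrum 𝕜 M) : ‖z‖ < 1 := by
  have : Nonempty ι := by
    by_contra h
    rw [not_nonempty_iff] at h
    simp only [spectrum.of_subsingleton, Set.mem_empty_iff_false] at hz
  have hnorm : ‖M ^ m‖ < 1 := by
    rw [linfty_opNorm_def, ← NNReal.coe_one, NNReal.coe_lt_coe, Finset.sup_lt_iff one_pos]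
    intro i _
    rw [← NNReal.coe_lt_coe]
    push_cast
    exact hM i
  -- the global `CompleteSpace (Matrix ι ι 𝕜)` instance is for the entrywise uniformity
  have : @CompleteSpace (Matrix ι ι 𝕜) (PseudoMetricSpace.toUniformSpace) :=
    FiniteDimensional.complete 𝕜 _
  have hzm : ‖z‖ ^ m < 1 := by
    rw [← norm_pow]
    exact (spectrum.norm_le_norm_of_mem (spectrum.pow_mem_pow M m hz)).trans_lt hnorm
  by_contra! h
  exact (one_le_pow₀ h).not_gt hzm

end Matrix

theorem Fin.sum_succ_div_sum {n : ℕ} (x : Fin (n + 1) → ℝ) (hx : 0 < ∑ l, x l) :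
    (∑ j : Fin n, x j.succ) / ∑ l, x l = 1 - x 0 / ∑ l, x l := by
  rw [eq_sub_iff_add_eq, ← add_div, add_comm, ← Fin.sum_univ_succ x, div_self hx.ne']

theorem stmt_1_general (n : ℕ) (w : Fin (n + 1) → Fin (n + 1) → ℝ)
    (hw : ∀ i j, 0 ≤ w i j)
    (hrow : ∀ i : Fin n, 0 < ∑ j, w i.succ j)
    (htree : ∀ i : Fin n, ∃ (q : ℕ) (c : ℕ → Fin n), c 0 = i ∧
      (∀ l < q, 0 < w (c l).succ (c (l + 1)).succ) ∧ 0 < w (c q).succ 0)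
    (D : Matrix (Fin n) (Fin n) ℝ)
    (hD : ∀ i j, D i j = w i.succ j.succ / ∑ l, w i.succ l) :
    (∀ i, ∑ j, |(D ^ n) i j| < 1) ∧
      (∀ z ∈ (D.map (fun x => (x : ℂ))).charpoly.roots, ‖z‖ < 1) := by
  have hD_nonneg : ∀ i j, 0 ≤ D i j := fun i j => hD i j ▸ div_nonneg (hw _ _) (hrow i).le
  have hD_rowSum : ∀ i, ∑ j, D i j = 1 - w i.succ 0 / ∑ l, w i.succ l := fun i => by
    simp only [hD, ← sum_div, Fin.sum_succ_div_sum _ (hrow i)]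
  have hD_row_le : ∀ i, ∑ j, D i j ≤ 1 := fun i =>
    hD_rowSum i ▸ sub_le_self _ (div_nonneg (hw _ _) (hrow i).le)
  have hD_path : ∀ i, ∃ (q : ℕ) (c : ℕ → Fin n), c 0 = i ∧
      (∀ l < q, 0 < D (c l) (c (l + 1))) ∧ ∑ j, D (c q) j < 1 := fun i => by
    obtain ⟨q, c, hc0, hc, hq⟩ := htree i
    exact ⟨q, c, hc0, fun l hl => hD _ _ ▸ div_pos (hc l hl) (hrow _),
      hD_rowSum _ ▸ sub_lt_self _ (div_pos hq (hrow _))⟩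
  have hsum : ∀ i, ∑ j, |(D ^ n) i j| < 1 := fun i => by
    simpa only [abs_of_nonneg (Matrix.pow_apply_nonneg hD_nonneg n i _), Fintype.card_fin]
      using Matrix.sum_pow_card_apply_lt_one hD_nonneg hD_row_le hD_path i
  refine ⟨hsum, fun z hz => Matrix.norm_lt_one_of_mem_spectrum (m := n) (fun i => ?_)
    (Matrix.mem_spectrum_of_isRoot_charpoly (Polynomial.isRoot_of_mem_roots hz))⟩
  have hmap : D.map (fun x => (x : ℂ)) ^ n = (D ^ n).map Complex.ofRealHom :=
    (Matrix.map_pow D Complex.ofRealHom n).symm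
  simpa only [hmap, Matrix.map_apply, Complex.ofRealHom_eq_coe, Complex.norm_real,
    Real.norm_eq_abs] using hsum i

/-- Lemma 1 of the paper: under the spanning-tree assumption on the sampled interaction
graph, the normalized adjacency matrix `D = B⁻¹ Ŵ` satisfies `‖Dⁿ‖_∞ < 1` (every absolute
row sum of `Dⁿ` is `< 1`), hence every complex eigenvalue of `D` has modulus `< 1`. -/
theorem stmt_1 (n : ℕ) (hn : 1 ≤ n) (w : Fin (n + 1) → Fin (n + 1) → ℝ)
    (hw : ∀ i j, 0 ≤ w i j) (hdiag : ∀ i, w i i = 0)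
    (hrow : ∀ i : Fin n, 0 < ∑ j, w i.succ j)
    (htree : ∀ i : Fin n, ∃ (q : ℕ) (c : ℕ → Fin n), c 0 = i ∧
      (∀ l < q, 0 < w (c l).succ (c (l + 1)).succ) ∧ 0 < w (c q).succ 0)
    (D : Matrix (Fin n) (Fin n) ℝ)
    (hD : ∀ i j, D i j = w i.succ j.succ / ∑ l, w i.succ l) :
    (∀ i, ∑ j, |(D ^ n) i j| < 1) ∧
      (∀ z ∈ (D.map (fun x => (x : ℂ))).charpoly.roots, ‖z‖ < 1) :=
  stmt_1_general n w hw hrow htree D hD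
end

section
/- Let p ∈ ℝ and q ∈ ℂ. Then every complex root z of the quadratic z² + p·z + q satisfies Re(z) < 0 if and only if p > 0 and p²·Re(q) > (Im(q))². -/
/-!
If `z = x + iy` is a root of `z² + pz + q` with `p` real, then separating real and imaginary parts
of the equation gives the identity `p² Re q - (Im q)² = -x (x + p) (p² + 4y²)`. The other root is
`-p - z`, with real part `-x - p`, so the right-hand side is positive exactly when both roots lie
strictly on the same side of the imaginary axis; their real parts sum to `-p`, so `p > 0` decides
which side.
-/

theorem exists_monic_quadratic_root (b c : ℂ) : ∃ z : ℂ, z ^ 2 + b * z + c = 0 := by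
  obtain ⟨z, hz⟩ :=
    exists_quadratic_eq_zero (one_ne_zero' ℂ) (IsAlgClosed.exists_eq_mul_self (discrim 1 b c))
  exact ⟨z, by simpa [sq] using hz⟩

theorem monic_quadratic_root_neg_sub {R : Type*} [CommRing R] {b c z : R}
    (hz : z ^ 2 + b * z + c = 0) : (-b - z) ^ 2 + b * (-b - z) + c = 0 := by
  linear_combination hz

theorem sq_mul_re_sub_sq_im_of_root {p : ℝ} {q z : ℂ} (hz : z ^ 2 + (p : ℂ) * z + q = 0) :
    p ^ 2 * q.re - q.im ^ 2 = -(z.re * (z.re + p) * (p ^ 2 + 4 * z.im ^ 2)) := by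
  have hre := congrArg Complex.re hz
  have him := congrArg Complex.im hz
  simp only [Complex.add_re, Complex.add_im, Complex.mul_re, Complex.mul_im, sq,
    Complex.ofReal_re, Complex.ofReal_im, Complex.zero_re, Complex.zero_im] at hre him
  linear_combination p ^ 2 * hre + (2 * z.re * z.im + p * z.im - q.im) * him

/-- Hurwitz stability criterion for the monic complex quadratic `z² + pz + q` with
real linear coefficient `p`: every root has negative real part iff `p > 0` and
`p² Re(q) > (Im q)²`. -/
theorem stmt_5 (p : ℝ) (q : ℂ) :
    (∀ z : ℂ, z ^ 2 + (p : ℂ) * z + q = 0 → z.re < 0) ↔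
      (0 < p ∧ p ^ 2 * q.re > q.im ^ 2) := by
  constructor
  · intro hstable
    obtain ⟨z, hz⟩ := exists_monic_quadratic_root p q
    have hx : z.re < 0 := hstable z hz
    have hxp : 0 < z.re + p := by
      have := hstable _ (monic_quadratic_root_neg_sub hz)
      simp only [Complex.sub_re, Complex.neg_re, Complex.ofReal_re] at this
      linarith
    have hp : 0 < p := by linarith
    refine ⟨hp, ?_⟩
    have hpos : 0 < -z.re * (z.re + p) * (p ^ 2 + 4 * z.im ^ 2) :=
      mul_pos (mul_pos (neg_pos.mpr hx) hxp) (by positivity)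
    linarith [sq_mul_re_sub_sq_im_of_root hz]
  · rintro ⟨hp, hq⟩ z hz
    by_contra! hx
    have : 0 ≤ z.re * (z.re + p) * (p ^ 2 + 4 * z.im ^ 2) :=
      mul_nonneg (mul_nonneg hx (by linarith)) (by positivity)
    linarith [sq_mul_re_sub_sq_im_of_root hz]
end

section
/- Let s ∈ ℂ with s ≠ 1, and let α, β, h be strictly positive reals. Set θ = Re(2/(1 − s)) and ϑ = Im(2/(1 − s)). Then every complex root λ of the quadratic ψ(λ) = λ² + ((αh + β)(1 − s) − 2)·λ + 1 − β(1 − s) satisfies |λ| < 1 if and only if β²·(2(θ − β)/(αh) − 1) > ϑ². -/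
/-!
The Cayley transform `u = (λ + 1) / (λ - 1)` maps the open unit disc onto the open left half-plane,
and `(u - 1)² ψ((u + 1) / (u - 1)) = (1 - s) (α h u² + 2 β u + 4 / (1 - s) - α h - 2 β)`.
For a quadratic `u² + p u + c` with `p > 0` real, its roots `u, v` satisfy `Re (u + v) = -p`,
`Im (u + v) = 0` and `p² Re c - (Im c)² = Re u Re v (p² + (Im u - Im v)²)`; so both real parts
are negative exactly when `(Im c)² < p² Re c`. With `Re (4 / (1 - s)) = 2 θ` and
`Im (4 / (1 - s)) = 2 ϑ` this is the stated inequality.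
-/

namespace Complex

theorem re_add_one_div_sub_one_neg_iff {l : ℂ} (hl : l ≠ 1) :
    ((l + 1) / (l - 1)).re < 0 ↔ ‖l‖ < 1 := by
  have hre : ((l + 1) / (l - 1)).re = (‖l‖ ^ 2 - 1) / normSq (l - 1) := by
    rw [div_re, Complex.sq_norm]
    simp only [normSq_apply, add_re, sub_re, one_re, add_im, sub_im, one_im]
    ring
  have hpos : 0 < normSq (l - 1) := normSq_pos.mpr (sub_ne_zero.mpr hl)
  rw [hre, div_lt_iff₀ hpos, zero_mul, sub_neg, sq_lt_one_iff₀ (norm_nonneg l)]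

theorem exists_add_eq_neg_and_mul_eq (B C : ℂ) : ∃ u v : ℂ, u + v = -B ∧ u * v = C := by
  obtain ⟨d, hd⟩ := IsAlgClosed.exists_eq_mul_self (B ^ 2 - 4 * C)
  exact ⟨(-B + d) / 2, (-B - d) / 2, by ring, by linear_combination (1 / 4 : ℂ) * hd⟩

theorem re_neg_and_re_neg_iff {u v : ℂ} (him : (u + v).im = 0) (hre : (u + v).re < 0) :
    u.re < 0 ∧ v.re < 0 ↔ (u * v).im ^ 2 < (u + v).re ^ 2 * (u * v).re := by
  have key : (u + v).re ^ 2 * (u * v).re - (u * v).im ^ 2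
      = u.re * v.re * ((u + v).re ^ 2 + (u.im - v.im) ^ 2) := by
    simp only [add_re, add_im, mul_re, mul_im] at him ⊢
    linear_combination (-(u.re + v.re) * (u.re * v.im + v.re * u.im)) * him
  have hfac : 0 < (u + v).re ^ 2 + (u.im - v.im) ^ 2 :=
    add_pos_of_pos_of_nonneg (sq_pos_of_neg hre) (sq_nonneg _)
  rw [← sub_pos (b := (u * v).im ^ 2), key, mul_pos_iff_of_pos_right hfac, mul_pos_iff]
  simp only [add_re] at hre
  exact ⟨Or.inr, fun h => h.resolve_left fun ⟨hu, hv⟩ => by linarith⟩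

theorem forall_re_neg_of_sq_add_mul_add_eq_zero_iff {p : ℝ} (hp : 0 < p) (c : ℂ) :
    (∀ u : ℂ, u ^ 2 + p * u + c = 0 → u.re < 0) ↔ c.im ^ 2 < p ^ 2 * c.re := by
  obtain ⟨u, v, hsum, hprod⟩ := exists_add_eq_neg_and_mul_eq (p : ℂ) c
  have hfactor : ∀ x : ℂ, x ^ 2 + p * x + c = (x - u) * (x - v) := fun x => by
    linear_combination x * hsum - hprod
  simp only [hfactor, mul_eq_zero, sub_eq_zero, or_imp, forall_and, forall_eq]
  rw [re_neg_and_re_neg_iff (by simp [hsum]) (by simpa [hsum] using hp), hsum, hprod]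
  simp

theorem forall_norm_lt_one_iff_forall_re_neg (B C : ℂ) (h1 : 1 + B + C ≠ 0) :
    (∀ l : ℂ, l ^ 2 + B * l + C = 0 → ‖l‖ < 1) ↔
      ∀ u : ℂ, (1 + B + C) * u ^ 2 + 2 * (1 - C) * u + (1 - B + C) = 0 → u.re < 0 := by
  constructor
  · intro H u hu
    have hu1 : u - 1 ≠ 0 := by
      rintro h
      rw [sub_eq_zero.mp h] at hu
      have h4 : (4 : ℂ) = 0 := by linear_combination hu
      norm_num at h4
    set l := (u + 1) / (u - 1) with hl
    have hl1 : l - 1 ≠ 0 := by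
      rw [hl, div_sub_one hu1]
      exact div_ne_zero (by norm_num) hu1
    have hroot : l ^ 2 + B * l + C = 0 := by
      rw [hl]; field_simp; linear_combination hu
    have hinv : (l + 1) / (l - 1) = u := by
      rw [div_eq_iff hl1, hl]; field_simp; ring
    rw [← hinv]
    exact (re_add_one_div_sub_one_neg_iff (sub_ne_zero.mp hl1)).mpr (H l hroot)
  · intro H l hl
    have hl1 : l - 1 ≠ 0 := by
      rintro h
      rw [sub_eq_zero.mp h] at hl
      exact h1 (by linear_combination hl)
    refine (re_add_one_div_sub_one_neg_iff (sub_ne_zero.mp hl1)).mp (H _ ?_)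
    field_simp
    linear_combination 4 * hl

theorem quadratic_roots_norm_lt_one_iff {a β : ℝ} (ha : 0 < a) (hβ : 0 < β) {w : ℂ} (hw : w ≠ 0) :
    (∀ l : ℂ, l ^ 2 + (((a + β : ℝ) : ℂ) * w - 2) * l + (1 - β * w) = 0 → ‖l‖ < 1) ↔
      β ^ 2 * (2 * ((2 / w).re - β) / a - 1) > (2 / w).im ^ 2 := by
  have hscale : (a : ℂ) * w ≠ 0 := mul_ne_zero (ofReal_ne_zero.mpr ha.ne') hw
  set B : ℂ := ((a + β : ℝ) : ℂ) * w - 2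
  set C : ℂ := 1 - β * w
  set c : ℂ := (4 / w - ((a + 2 * β : ℝ) : ℂ)) / (a : ℂ) with hc
  have hone : 1 + B + C = a * w := by simp only [B, C]; push_cast; ring
  have hcayley (u : ℂ) : (1 + B + C) * u ^ 2 + 2 * (1 - C) * u + (1 - B + C)
      = a * w * (u ^ 2 + ((2 * β / a : ℝ) : ℂ) * u + c) := by
    have ha' : (a : ℂ) ≠ 0 := ofReal_ne_zero.mpr ha.ne'
    simp only [B, C, hc]; push_cast; field_simp; ring
  have h4 : (4 : ℂ) / w = ((2 : ℝ) : ℂ) * (2 / w) := by push_cast; ring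
  have hcre : c.re = (2 * (2 / w).re - (a + 2 * β)) / a := by
    rw [hc, div_ofReal_re, sub_re, ofReal_re, h4, re_ofReal_mul]
  have hcim : c.im = 2 * (2 / w).im / a := by
    rw [hc, div_ofReal_im, sub_im, ofReal_im, h4, im_ofReal_mul, sub_zero]
  rw [forall_norm_lt_one_iff_forall_re_neg B C (hone ▸ hscale)]
  simp only [hcayley, mul_eq_zero, hscale, false_or]
  rw [forall_re_neg_of_sq_add_mul_add_eq_zero_iff (by positivity) c, hcre, hcim, gt_iff_lt]
  field_simp
  ring_nf

end Complex

/-- Key spectral step in Theorem 4 of the paper: for `s ≠ 1`, `α, β, h > 0`,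
with `θ = Re(2/(1−s))` and `ϑ = Im(2/(1−s))`, every root of
`ψ(λ) = λ² + ((αh + β)(1 − s) − 2)λ + 1 − β(1 − s)` lies in the open unit disc iff
`β²(2(θ − β)/(αh) − 1) > ϑ²`. -/
theorem stmt_6 (s : ℂ) (hs : s ≠ 1) (α β h : ℝ) (hα : 0 < α) (hβ : 0 < β) (hh : 0 < h)
    (θ ϑ : ℝ) (hθ : θ = (2 / (1 - s)).re) (hϑ : ϑ = (2 / (1 - s)).im) :
    (∀ l : ℂ, l ^ 2 + ((((α * h + β) : ℝ) : ℂ) * (1 - s) - 2) * l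
        + 1 - (β : ℂ) * (1 - s) = 0 → ‖l‖ < 1) ↔
      β ^ 2 * (2 * (θ - β) / (α * h) - 1) > ϑ ^ 2 := by
  subst hθ hϑ
  simp only [add_sub_assoc]
  exact Complex.quadratic_roots_norm_lt_one_iff (mul_pos hα hh) hβ (sub_ne_zero.mpr hs.symm)
end

section
/- Let D be an n×n real matrix and let α, β, h be reals. Assume that every root s ∈ ℂ of the characteristic polynomial of D satisfies s ≠ 1, 0 < α < 2(1 − Re(s))/|1 − s|², and 0 < β < 2(1 − Re(s))/|1 − s|². Then every complex eigenvalue of the 2n×2n block matrix Λ₀ = [[(1−α)I_n + αD, h((1−β)I_n + βD)], [0, (1−β)I_n + βD]] has modulus strictly less than 1. -/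
/-!
`Λ₀` is block upper triangular, so its eigenvalues are those of the diagonal blocks
`(1 - γ) I + γ D` for `γ = α, β`. By the spectral mapping theorem these are the numbers
`1 - γ (1 - s)` for eigenvalues `s` of `D`, and with `w = 1 - s` one has
`|1 - γ w|² = 1 - γ (2 Re w - γ |w|²)`, which is `< 1` exactly when `0 < γ < 2 Re w / |w|²`.
-/

open Matrix Polynomial

theorem spectrum_algebraMap_add_smul_subset {𝕜 A : Type*} [Field 𝕜] [IsAlgClosed 𝕜] [Ring A]
    [Algebra 𝕜 A] [FiniteDimensional 𝕜 A] (a : A) (c γ : 𝕜) :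
    spectrum 𝕜 (algebraMap 𝕜 A c + γ • a) ⊆ (fun s => c + γ * s) '' spectrum 𝕜 a := by
  intro z hz
  obtain hA | hA := subsingleton_or_nontrivial A
  · simp [spectrum.of_subsingleton] at hz
  have haeval : aeval a (C c + C γ * X) = algebraMap 𝕜 A c + γ • a := by
    simp [Algebra.smul_def]
  rw [← haeval, spectrum.map_polynomial_aeval_of_nonempty a _
    (spectrum.nonempty_of_isAlgClosed_of_finiteDimensional 𝕜 a)] at hz
  simpa using hz

theorem Matrix.mem_charpoly_roots_iff {ι K : Type*} [Fintype ι] [DecidableEq ι] [Field K]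
    (M : Matrix ι ι K) (z : K) : z ∈ M.charpoly.roots ↔ z ∈ spectrum K M := by
  rw [mem_roots M.charpoly_monic.ne_zero, mem_spectrum_iff_isRoot_charpoly]

theorem Complex.norm_one_sub_add_mul_lt_one {s : ℂ} {γ : ℝ} (hs : s ≠ 1) (hγ : 0 < γ)
    (hγs : γ < 2 * (1 - s.re) / ‖1 - s‖ ^ 2) : ‖(1 - γ) + γ * s‖ < 1 := by
  have hpos : 0 < ‖1 - s‖ ^ 2 := by
    have : (1 : ℂ) - s ≠ 0 := sub_ne_zero.mpr hs.symm
    positivity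
  have hnormsq : ‖1 - s‖ ^ 2 = (1 - s.re) ^ 2 + s.im ^ 2 := by
    rw [Complex.sq_norm, Complex.normSq_apply]
    simp only [Complex.sub_re, Complex.one_re, Complex.sub_im, Complex.one_im, zero_sub,
      mul_neg, neg_mul, neg_neg]
    ring
  have hγs' : γ * ((1 - s.re) ^ 2 + s.im ^ 2) < 2 * (1 - s.re) := by
    rw [← hnormsq]
    exact (lt_div_iff₀ hpos).mp hγs
  rw [← sq_lt_one_iff₀ (norm_nonneg _), Complex.sq_norm, Complex.normSq_apply]
  simp only [Complex.add_re, Complex.sub_re, Complex.one_re, Complex.ofReal_re, Complex.mul_re,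
    Complex.ofReal_im, zero_mul, sub_zero, Complex.add_im, Complex.sub_im, Complex.one_im,
    sub_self, Complex.mul_im, add_zero, zero_add]
  nlinarith

theorem Matrix.norm_lt_one_of_mem_charpoly_roots_affine {ι : Type*} [Fintype ι] [DecidableEq ι]
    (M : Matrix ι ι ℂ) (γ : ℝ)
    (hM : ∀ s ∈ M.charpoly.roots, s ≠ 1 ∧ 0 < γ ∧ γ < 2 * (1 - s.re) / ‖1 - s‖ ^ 2) {z : ℂ}
    (hz : z ∈ ((1 - γ : ℂ) • (1 : Matrix ι ι ℂ) + (γ : ℂ) • M).charpoly.roots) : ‖z‖ < 1 := by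
  rw [mem_charpoly_roots_iff, ← Algebra.algebraMap_eq_smul_one] at hz
  obtain ⟨s, hs, rfl⟩ := spectrum_algebraMap_add_smul_subset M _ _ hz
  obtain ⟨hs1, hγ, hγs⟩ := hM s ((mem_charpoly_roots_iff M s).mpr hs)
  exact Complex.norm_one_sub_add_mul_lt_one hs1 hγ hγs

/-- Schur stability claim of Theorem 1: if every complex eigenvalue `s` of `D`
satisfies `s ≠ 1` and `0 < α, β < 2(1 − Re s)/|1 − s|²`, then every complex eigenvalue
of the first-order estimator matrix
`Λ₀ = [[(1−α)I + αD, h((1−β)I + βD)], [0, (1−β)I + βD]]` has modulus `< 1`. -/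
theorem stmt_9 (n : ℕ) (D : Matrix (Fin n) (Fin n) ℝ) (α β h : ℝ)
    (heig : ∀ s ∈ (D.map (fun x => (x : ℂ))).charpoly.roots,
      s ≠ 1 ∧ 0 < α ∧ α < 2 * (1 - s.re) / ‖1 - s‖ ^ 2 ∧
        0 < β ∧ β < 2 * (1 - s.re) / ‖1 - s‖ ^ 2)
    (Λ₀ : Matrix (Fin n ⊕ Fin n) (Fin n ⊕ Fin n) ℝ)
    (hΛ₀ : Λ₀ = Matrix.fromBlocks
      ((1 - α) • (1 : Matrix (Fin n) (Fin n) ℝ) + α • D)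
      (h • ((1 - β) • (1 : Matrix (Fin n) (Fin n) ℝ) + β • D))
      0
      ((1 - β) • (1 : Matrix (Fin n) (Fin n) ℝ) + β • D)) :
    ∀ z ∈ (Λ₀.map (fun x => (x : ℂ))).charpoly.roots, ‖z‖ < 1 := by
  intro z hz
  set Dc := D.map (fun x => (x : ℂ))
  have hmap (γ : ℝ) : ((1 - γ) • (1 : Matrix (Fin n) (Fin n) ℝ) + γ • D).map (fun x => (x : ℂ))
      = (1 - γ : ℂ) • (1 : Matrix (Fin n) (Fin n) ℂ) + (γ : ℂ) • Dc := by
    ext i j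
    simp [Dc, Matrix.one_apply, apply_ite]
  simp only [hΛ₀, fromBlocks_map, hmap, Matrix.map_zero _ Complex.ofReal_zero] at hz
  rw [charpoly_fromBlocks_zero₂₁, roots_mul (mul_ne_zero (charpoly_monic _).ne_zero
    (charpoly_monic _).ne_zero), Multiset.mem_add] at hz
  rcases hz with hz | hz
  · exact norm_lt_one_of_mem_charpoly_roots_affine Dc α
      (fun s hs => ⟨(heig s hs).1, (heig s hs).2.1, (heig s hs).2.2.1⟩) hz
  · exact norm_lt_one_of_mem_charpoly_roots_affine Dc β
      (fun s hs => ⟨(heig s hs).1, (heig s hs).2.2.2.1, (heig s hs).2.2.2.2⟩) hz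
end

section
/- Let D be an n×n complex matrix and let α, β, h ∈ ℂ, and define the 2n×2n block matrix Γ₀ = [[(1−αh)I_n + αhD, h((1−β)I_n + βD)], [α(D − I_n), (1−β)I_n + βD]]. Then the characteristic polynomial of Γ₀ equals the product, over the multiset of roots s ∈ ℂ of the characteristic polynomial of D (with multiplicity), of the quadratics X² + ((αh + β)(1 − s) − 2)·X + 1 − β(1 − s). -/
/-!
All four blocks of `Γ₀` are polynomials `p, q, r, s` in `D`, so they commute. Over the fraction
field of `ℂ[X]` the lower-right block of `X - Γ₀` is invertible, its determinant being a nonzero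
characteristic polynomial, and the Schur complement gives
`det (X - Γ₀) = det (((X - p) (X - s) - q r)(D))`. For `Γ₀` the `D²` terms cancel, so this is
`det (a + b D)` with `a, b ∈ ℂ[X]`, which is `∏ (a + b t)` over the eigenvalues `t` of `D`.
-/

open Polynomial

namespace Matrix

variable {n : Type*} [Fintype n] [DecidableEq n]

theorem algebraMap_charpoly {R S : Type*} [CommRing R] [CommRing S] [Algebra R S]
    [Algebra R[X] S] [IsScalarTower R R[X] S] (A : Matrix n n R) :
    algebraMap R[X] S A.charpoly
      = (scalar n (algebraMap R[X] S X) - A.map (algebraMap R S)).det := by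
  rw [charpoly, RingHom.map_det]
  congr
  ext i j
  obtain rfl | hij := eq_or_ne i j <;> simp [*, IsScalarTower.algebraMap_apply R R[X] S]

theorem det_fromBlocks_of_commute {R : Type*} [CommRing R] (A B C D : Matrix n n R)
    [Invertible D] (hCD : Commute C D) :
    (fromBlocks A B C D).det = (A * D - B * C).det := by
  rw [det_fromBlocks₂₂, ← det_mul, det_mul_comm, sub_mul, Matrix.mul_assoc (B * ⅟D), hCD.eq,
    ← Matrix.mul_assoc, Matrix.mul_assoc B, invOf_mul_self, Matrix.mul_one]

section CommRing

variable {R : Type*} [CommRing R] (M : Matrix n n R)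

theorem scalar_sub_fromBlocks_aeval (x : R) (p q r s : R[X]) :
    scalar (n ⊕ n) x - fromBlocks (aeval M p) (aeval M q) (aeval M r) (aeval M s)
      = fromBlocks (aeval M (C x - p)) (aeval M (-q)) (aeval M (-r)) (aeval M (C x - s)) := by
  ext (i | i) (j | j) <;>
    simp [Algebra.algebraMap_eq_smul_one, scalar_apply, diagonal_apply, one_apply]

theorem det_fromBlocks_aeval (p q r s : R[X]) (hs : IsUnit (aeval M s).det) :
    (fromBlocks (aeval M p) (aeval M q) (aeval M r) (aeval M s)).det
      = (aeval M (p * s - q * r)).det := by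
  have := invertibleOfIsUnitDet _ hs
  rw [det_fromBlocks_of_commute _ _ _ _ ((Commute.all r s).map (aeval M)), map_sub, map_mul,
    map_mul]

theorem det_scalar_sub_fromBlocks_aeval (x : R) (p q r s : R[X])
    (hs : IsUnit (aeval M (C x - s)).det) :
    (scalar (n ⊕ n) x - fromBlocks (aeval M p) (aeval M q) (aeval M r) (aeval M s)).det
      = (aeval M ((C x - p) * (C x - s) - q * r)).det := by
  rw [scalar_sub_fromBlocks_aeval, det_fromBlocks_aeval _ _ _ _ _ hs, neg_mul_neg]

end CommRing

theorem det_aeval_C_add_C_mul_X {K : Type*} [Field K] (M : Matrix n n K)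
    (hM : M.charpoly.Splits) (a b : K) :
    (aeval M (C a + C b * X)).det = (M.charpoly.roots.map fun t => a + b * t).prod := by
  have hcard : M.charpoly.roots.card = Fintype.card n := by
    rw [← hM.natDegree_eq_card_roots, charpoly_natDegree_eq_dim]
  rcases eq_or_ne b 0 with rfl | hb
  · simp [Algebra.algebraMap_eq_smul_one, hcard]
  · have : aeval M (C a + C b * X) = (-b) • (scalar n (-(a / b)) - M) := by
      rw [smul_sub, scalar_apply, ← smul_one_eq_diagonal, smul_smul, neg_mul_neg,
        mul_div_cancel₀ _ hb, neg_smul, sub_neg_eq_add]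
      simp [Algebra.algebraMap_eq_smul_one]
    rw [this, det_smul, ← eval_charpoly, hM.eval_eq_prod_roots_of_monic M.charpoly_monic,
      ← hcard, ← Multiset.prod_replicate, ← Multiset.map_const', ← Multiset.prod_map_mul]
    refine congrArg _ (Multiset.map_congr rfl fun t _ => ?_)
    field_simp
    ring

/-- In `k[X][X]`, `C X` is the variable of the characteristic polynomial and `X` stands for `D`. -/
theorem charpoly_fromBlocks_aeval {k : Type*} [Field k] (D : Matrix n n k)
    (hD : D.charpoly.Splits) (p q r s A B : k[X])
    (h : (C X - p.map C) * (C X - s.map C) - q.map C * r.map C = C A + C B * X) :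
    (fromBlocks (aeval D p) (aeval D q) (aeval D r) (aeval D s)).charpoly
      = (D.charpoly.roots.map fun t => A + B * C t).prod := by
  let K := FractionRing k[X]
  let φ := algebraMap k[X] K
  let M := D.map (algebraMap k K)
  have hφ : φ.comp C = algebraMap k K := (IsScalarTower.algebraMap_eq k k[X] K).symm
  have hmap (p : k[X]) :
      (aeval D p).map (algebraMap k K) = aeval M (p.map (algebraMap k K)) := by
    rw [aeval_map_algebraMap]
    exact (aeval_algHom_apply (Algebra.ofId k K).mapMatrix D p).symm
  have hs : IsUnit (aeval M (C (φ X) - s.map (algebraMap k K))).det := by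
    rw [isUnit_iff_ne_zero, map_sub, aeval_C, ← hmap,
      show algebraMap K (Matrix n n K) (φ X) = scalar n (φ X) from rfl, ← algebraMap_charpoly]
    exact (map_ne_zero_iff φ (IsFractionRing.injective k[X] K)).mpr (charpoly_monic _).ne_zero
  have hM : M.charpoly.Splits := by
    rw [charpoly_map]
    exact hD.map _
  have hschur : (C (φ X) - p.map (algebraMap k K)) * (C (φ X) - s.map (algebraMap k K))
      - q.map (algebraMap k K) * r.map (algebraMap k K) = C (φ A) + C (φ B) * X := by
    simpa [Polynomial.map_map, hφ] using congrArg (Polynomial.map φ) h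
  apply IsFractionRing.injective k[X] K
  rw [algebraMap_charpoly, fromBlocks_map, hmap, hmap, hmap, hmap,
    det_scalar_sub_fromBlocks_aeval _ _ _ _ _ _ hs, hschur, det_aeval_C_add_C_mul_X _ hM,
    charpoly_map, hD.roots_map, Multiset.map_map, map_multiset_prod, Multiset.map_map]
  refine congrArg _ (Multiset.map_congr rfl fun t _ => ?_)
  simp [φ, ← hφ]

end Matrix

/-- Factorization of the characteristic polynomial of the second-order estimator matrix
`Γ₀ = [[(1−αh)I + αhD, h((1−β)I + βD)], [α(D − I), (1−β)I + βD]]` as the product over the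
eigenvalues `s` of `D` (with multiplicity) of `X² + ((αh + β)(1 − s) − 2)X + 1 − β(1 − s)`. -/
theorem stmt_10 (n : ℕ) (D : Matrix (Fin n) (Fin n) ℂ) (α β h : ℂ)
    (Γ₀ : Matrix (Fin n ⊕ Fin n) (Fin n ⊕ Fin n) ℂ)
    (hΓ₀ : Γ₀ = Matrix.fromBlocks
      ((1 - α * h) • (1 : Matrix (Fin n) (Fin n) ℂ) + (α * h) • D)
      (h • ((1 - β) • (1 : Matrix (Fin n) (Fin n) ℂ) + β • D))
      (α • (D - 1))
      ((1 - β) • (1 : Matrix (Fin n) (Fin n) ℂ) + β • D)) :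
    Γ₀.charpoly =
      (D.charpoly.roots.map (fun s =>
        X ^ 2 + C ((α * h + β) * (1 - s) - 2) * X + C (1 - β * (1 - s)))).prod := by
  have hblocks : Γ₀ = Matrix.fromBlocks (aeval D (C (1 - α * h) + C (α * h) * X))
      (aeval D (C h * (C (1 - β) + C β * X))) (aeval D (C α * (X - 1)))
      (aeval D (C (1 - β) + C β * X)) := by
    rw [hΓ₀]
    congr 1 <;> simp only [map_add, map_mul, map_sub, map_one, aeval_C, aeval_X,
      Algebra.algebraMap_eq_smul_one, smul_mul_assoc, one_mul] <;> module
  rw [hblocks, Matrix.charpoly_fromBlocks_aeval D (IsAlgClosed.splits _) _ _ _ _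
    (X ^ 2 + C (α * h + β - 2) * X + C (1 - β)) (C β - C (α * h + β) * X)]
  · refine congrArg _ (Multiset.map_congr rfl fun s _ => ?_)
    simp only [map_sub, map_mul, map_add, map_one]
    ring
  · simp only [Polynomial.map_add, Polynomial.map_mul, Polynomial.map_sub, Polynomial.map_C,
      Polynomial.map_X, Polynomial.map_one, map_sub, map_mul, map_add, map_one, map_pow,
      map_ofNat]
    ring
end

section
/- Let D be an n×n real matrix and let α, β, h be strictly positive reals. Assume that every root s ∈ ℂ of the characteristic polynomial of D satisfies s ≠ 1, β < θ(s), and h < 2β²(θ(s) − β)/(α(ϑ(s)² + β²)), where θ(s) = Re(2/(1 − s)) and ϑ(s) = Im(2/(1 − s)). Then every complex eigenvalue of the 2n×2n block matrix Γ₀ = [[(1−αh)I_n + αhD, h((1−β)I_n + βD)], [α(D − I_n), (1−β)I_n + βD]] has modulus strictly less than 1. -/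
/-!
All blocks of `Γ₀` are polynomials in `D`, so they commute and
`det (z - Γ₀) = det (q(z) • 1 + r(z) • D)` with `q(z) = z² - (2 - αh - β) z + 1 - β` and
`r(z) = β - (αh + β) z`. An eigenvalue `z` of `Γ₀` therefore either solves `r(z) = 0`, so that
`z = β / (αh + β) ∈ (0, 1)`, or satisfies `q(z) + s r(z) = 0` for an eigenvalue `s` of `D`.
In the latter case the Cayley transform `w = (z + 1) / (z - 1)` turns this into
`αh w² + 2β w + (2T - αh - 2β) = 0` with `T = 2 / (1 - s)`, and the bound on `h` is exactly the
Hurwitz condition for this complex quadratic, so `Re w < 0`, i.e. `|z| < 1`.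
-/

open Matrix Polynomial

theorem Matrix.det_fromBlocks_of_commute_s11 {m R : Type*} [Fintype m] [DecidableEq m] [CommRing R]
    (A B C D : Matrix m m R) (hCD : Commute C D) :
    (fromBlocks A B C D).det = (A * D - B * C).det := by
  -- Perturb `D` to `D + X • 1`, whose determinant is monic and hence a non-zero-divisor.
  set Dₓ : Matrix m m R[X] := scalar m X + D.map Polynomial.C
  have hCDₓ : Commute (C.map Polynomial.C) Dₓ :=
    (scalar_commute X (Commute.all X) _).symm.add_right (hCD.map (Polynomial.C).mapMatrix)
  have hmul : fromBlocks (A.map Polynomial.C) (B.map Polynomial.C) (C.map Polynomial.C) Dₓ *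
      fromBlocks Dₓ 0 (-C.map Polynomial.C) 1 =
      fromBlocks (A.map Polynomial.C * Dₓ - B.map Polynomial.C * C.map Polynomial.C)
        (B.map Polynomial.C) 0 Dₓ := by
    simp [fromBlocks_multiply, hCDₓ.eq, sub_eq_add_neg]
  have hmonic : Dₓ.det.Monic := by
    have : Dₓ = charmatrix (-D) := by rw [charmatrix, map_neg, sub_neg_eq_add]; rfl
    exact this ▸ charpoly_monic (-D)
  have hdet := congrArg det hmul
  rw [det_mul, det_fromBlocks_zero₁₂, det_fromBlocks_zero₂₁, det_one, mul_one] at hdet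
  have := congrArg (evalRingHom 0) (hmonic.isRegular.right hdet)
  rw [RingHom.map_det, RingHom.map_det] at this
  have hC : ∀ M : Matrix m m R, (M.map Polynomial.C).map (eval 0) = M := fun M => by ext; simp
  have hD : Dₓ.map (eval 0) = D := by ext i j; by_cases hij : i = j <;> simp [Dₓ, hij]
  simpa only [map_sub, map_mul, RingHom.mapMatrix_apply, fromBlocks_map, coe_evalRingHom, hC,
    hD] using this

theorem Matrix.eval_charpoly_fromBlocks_of_commute {m R : Type*} [Fintype m] [DecidableEq m]
    [CommRing R] {A B C D : Matrix m m R} (hCD : Commute C D) (z : R) :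
    (fromBlocks A B C D).charpoly.eval z = ((scalar m z - A) * (scalar m z - D) - B * C).det := by
  have hblocks : scalar (m ⊕ m) z - fromBlocks A B C D =
      fromBlocks (scalar m z - A) (-B) (-C) (scalar m z - D) := by
    ext (i | i) (j | j) <;> by_cases hij : i = j <;> simp [hij]
  have hcomm : Commute (-C) (scalar m z - D) :=
    ((scalar_commute z (Commute.all z) C).symm.sub_right hCD).neg_left
  rw [eval_charpoly, hblocks, det_fromBlocks_of_commute_s11 _ _ _ _ hcomm, neg_mul_neg]

theorem Matrix.isRoot_charpoly_of_det_smul_one_add_smul_eq_zero {m K : Type*} [Fintype m]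
    [DecidableEq m] [Field K] {M : Matrix m m K} {q r : K} (hr : r ≠ 0)
    (h : (q • (1 : Matrix m m K) + r • M).det = 0) : M.charpoly.IsRoot (-q / r) := by
  have : q • (1 : Matrix m m K) + r • M = (-r) • (scalar m (-q / r) - M) := by
    rw [smul_sub, scalar_apply, ← smul_one_eq_diagonal, smul_smul, neg_div, neg_mul_neg,
      mul_div_cancel₀ _ hr, neg_smul, sub_neg_eq_add]
  rw [this, det_smul, mul_eq_zero] at h
  rw [IsRoot.def, eval_charpoly]
  exact h.resolve_left (pow_ne_zero _ (neg_ne_zero.mpr hr))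

section Estimator

variable {m R S : Type*} [DecidableEq m] [CommRing R] [CommRing S]

def estimatorMatrix (α β h : R) (D : Matrix m m R) : Matrix (m ⊕ m) (m ⊕ m) R :=
  fromBlocks ((1 - α * h) • (1 : Matrix m m R) + (α * h) • D)
    (h • ((1 - β) • (1 : Matrix m m R) + β • D)) (α • (D - 1))
    ((1 - β) • (1 : Matrix m m R) + β • D)

theorem estimatorMatrix_map (f : R →+* S) (α β h : R) (D : Matrix m m R) :
    (estimatorMatrix α β h D).map f = estimatorMatrix (f α) (f β) (f h) (D.map f) := by
  simp [estimatorMatrix, fromBlocks_map, Matrix.map_add, Matrix.map_sub, Matrix.map_smul']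

theorem eval_charpoly_estimatorMatrix [Fintype m] (α β h : R) (D : Matrix m m R) (z : R) :
    (estimatorMatrix α β h D).charpoly.eval z =
      ((z ^ 2 - (2 - α * h - β) * z + (1 - β)) • (1 : Matrix m m R)
        + (β - (α * h + β) * z) • D).det := by
  have hD : Commute (D - 1) D := (Commute.refl D).sub_left (Commute.one_left D)
  rw [estimatorMatrix, eval_charpoly_fromBlocks_of_commute
    ((((Commute.one_right _).smul_right _).add_right (hD.smul_right β)).smul_left α)]
  congr 1
  simp only [scalar_apply, ← smul_one_eq_diagonal, mul_sub, sub_mul, mul_add, add_mul,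
    Matrix.smul_mul, Matrix.mul_smul, mul_one, one_mul, smul_smul]
  module

end Estimator

theorem Complex.re_neg_of_quadratic_eq_zero {a b : ℝ} {c w : ℂ} (ha : 0 < a) (hb : 0 < b)
    (hc : a * c.im ^ 2 < c.re * b ^ 2) (hw : a * w ^ 2 + b * w + c = 0) : w.re < 0 := by
  have hre : a * (w.re ^ 2 - w.im ^ 2) + b * w.re + c.re = 0 := by
    simpa [sq] using congrArg Complex.re hw
  have him : (2 * a * w.re + b) * w.im + c.im = 0 := by
    have := congrArg Complex.im hw
    simp only [sq, add_im, mul_im, ofReal_re, ofReal_im, mul_re, zero_mul, add_zero,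
      zero_im] at this
    linear_combination this
  by_contra! hx
  have hcre : 0 < c.re := by nlinarith [sq_nonneg c.im]
  -- For `Re w ≥ 0`, both `(2a Re w + b)²` and `a (Im w)² = a (Re w)² + b Re w + Re c`
  -- are at least their values at `w = 0`.
  have : c.re * b ^ 2 ≤ a * c.im ^ 2 := by
    have hsq : b ^ 2 ≤ (2 * a * w.re + b) ^ 2 := by nlinarith [mul_nonneg ha.le hx]
    calc c.re * b ^ 2 ≤ (a * w.im ^ 2) * (2 * a * w.re + b) ^ 2 := by
          gcongr
          nlinarith [mul_nonneg hb.le hx]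
      _ = a * c.im ^ 2 := by
          rw [show c.im = -((2 * a * w.re + b) * w.im) by linarith]; ring
  linarith

theorem Complex.norm_lt_one_of_re_add_one_div_sub_one_neg {z : ℂ}
    (h : ((z + 1) / (z - 1)).re < 0) : ‖z‖ < 1 := by
  have hre : ((z + 1) / (z - 1)).re = (‖z‖ ^ 2 - 1) / Complex.normSq (z - 1) := by
    rw [Complex.div_re, Complex.sq_norm]
    simp only [Complex.add_re, Complex.add_im, Complex.sub_re, Complex.sub_im,
      Complex.one_re, Complex.one_im, Complex.normSq_apply]
    ring
  rw [hre] at h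
  have := neg_of_div_neg_left h (Complex.normSq_nonneg _)
  nlinarith [norm_nonneg z]

theorem norm_lt_one_of_estimator_quadratic {α β h : ℝ} (hα : 0 < α) (hβ : 0 < β) (hh : 0 < h)
    {s z : ℂ} (hs : s ≠ 1)
    (hstep : h < 2 * β ^ 2 * ((2 / (1 - s)).re - β) / (α * ((2 / (1 - s)).im ^ 2 + β ^ 2)))
    (hz : z ^ 2 - (2 - α * h - β) * z + (1 - β) + s * (β - (α * h + β) * z) = 0) :
    ‖z‖ < 1 := by
  set T := 2 / (1 - s)
  have hs' : 1 - s ≠ 0 := sub_ne_zero.mpr hs.symm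
  have hT : (1 - s) * T = 2 := mul_div_cancel₀ _ hs'
  have hαh : 0 < α * h := mul_pos hα hh
  have hz1 : z - 1 ≠ 0 := by
    rintro hz1
    obtain rfl : z = 1 := sub_eq_zero.mp hz1
    have : ((α * h : ℝ) : ℂ) * (1 - s) = 0 := by push_cast; linear_combination hz
    simp [hα.ne', hh.ne', hs'] at this
  set w := (z + 1) / (z - 1)
  have hw : w * (z - 1) = z + 1 := div_mul_cancel₀ _ hz1
  have hcayley : (1 - s) * (z - 1) ^ 2 *
      ((α * h : ℝ) * w ^ 2 + (2 * β : ℝ) * w + (2 * T - α * h - 2 * β)) = 0 := by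
    push_cast
    linear_combination (1 - s) * (α * h * (w * (z - 1) + z + 1) + 2 * β * (z - 1)) * hw
      + 2 * (z - 1) ^ 2 * hT + 4 * hz
  have hquad :
      ((α * h : ℝ) : ℂ) * w ^ 2 + ((2 * β : ℝ) : ℂ) * w + (2 * T - α * h - 2 * β) = 0 := by
    simpa [hs', hz1] using hcayley
  refine Complex.norm_lt_one_of_re_add_one_div_sub_one_neg
    (Complex.re_neg_of_quadratic_eq_zero hαh (by positivity) ?_ hquad)
  have hden : 0 < α * (T.im ^ 2 + β ^ 2) := by positivity
  have hstep' := (lt_div_iff₀ hden).mp hstep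
  simp only [Complex.sub_re, Complex.sub_im, Complex.mul_re, Complex.mul_im, Complex.ofReal_re,
    Complex.ofReal_im, Complex.re_ofNat, Complex.im_ofNat]
  nlinarith

/-- Schur stability claim of Theorem 4: if every complex eigenvalue `s` of `D` satisfies
`s ≠ 1`, `β < θ(s)` and `h < 2β²(θ(s) − β)/(α(ϑ(s)² + β²))`, where `θ(s) = Re(2/(1−s))`
and `ϑ(s) = Im(2/(1−s))`, then every complex eigenvalue of the second-order estimator
matrix `Γ₀ = [[(1−αh)I + αhD, h((1−β)I + βD)], [α(D − I), (1−β)I + βD]]` has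
modulus `< 1`. -/
theorem stmt_11 (n : ℕ) (D : Matrix (Fin n) (Fin n) ℝ) (α β h : ℝ)
    (hα : 0 < α) (hβ : 0 < β) (hh : 0 < h)
    (heig : ∀ s ∈ (D.map (fun x => (x : ℂ))).charpoly.roots,
      s ≠ 1 ∧ β < (2 / (1 - s)).re ∧
        h < 2 * β ^ 2 * ((2 / (1 - s)).re - β) / (α * ((2 / (1 - s)).im ^ 2 + β ^ 2)))
    (Γ₀ : Matrix (Fin n ⊕ Fin n) (Fin n ⊕ Fin n) ℝ)
    (hΓ₀ : Γ₀ = Matrix.fromBlocks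
      ((1 - α * h) • (1 : Matrix (Fin n) (Fin n) ℝ) + (α * h) • D)
      (h • ((1 - β) • (1 : Matrix (Fin n) (Fin n) ℝ) + β • D))
      (α • (D - 1))
      ((1 - β) • (1 : Matrix (Fin n) (Fin n) ℝ) + β • D)) :
    ∀ z ∈ (Γ₀.map (fun x => (x : ℂ))).charpoly.roots, ‖z‖ < 1 := by
  intro z hz
  set D' := D.map (fun x => (x : ℂ))
  have hΓ : Γ₀.map (fun x => (x : ℂ)) = estimatorMatrix (α : ℂ) β h D' := by
    rw [hΓ₀]
    exact estimatorMatrix_map Complex.ofRealHom α β h D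
  have hdet : ((z ^ 2 - (2 - α * h - β) * z + (1 - β)) • (1 : Matrix (Fin n) (Fin n) ℂ)
      + ((β : ℂ) - (α * h + β) * z) • D').det = 0 := by
    rw [← eval_charpoly_estimatorMatrix, ← hΓ]
    exact (mem_roots'.mp hz).2
  by_cases hr : (β : ℂ) - (α * h + β) * z = 0
  · have hnorm : β = (α * h + β) * ‖z‖ := by
      have := congrArg norm (sub_eq_zero.mp hr)
      norm_cast at this
      rwa [norm_mul, Complex.norm_real, Real.norm_of_nonneg hβ.le,
        Real.norm_of_nonneg (by positivity)] at this
    nlinarith [mul_pos hα hh, norm_nonneg z]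
  · obtain ⟨hs, -, hstep⟩ := heig _ ((mem_roots (charpoly_monic _).ne_zero).mpr
      (isRoot_charpoly_of_det_smul_one_add_smul_eq_zero hr hdet))
    refine norm_lt_one_of_estimator_quadratic hα hβ hh hs hstep ?_
    rw [div_mul_cancel₀ _ hr]
    ring
end

section
/- Let m ≥ 1, let M be an m×m real symmetric positive semidefinite matrix with vᵀMv ≤ λ_M·‖v‖₂² for all v ∈ ℝᵐ (for some λ_M ≥ 0), and let K be an m×m real symmetric matrix with eᵀKe ≥ λ_K·‖e‖₂² for all e ∈ ℝᵐ (for some λ_K ∈ ℝ). Then for all e, v ∈ ℝᵐ: (1/4)·vᵀMv + vᵀM·tanh(e) + (1/2)·eᵀKe ≥ (1/2)·(λ_K − 2λ_M)·‖e‖₂², where tanh(e) denotes the vector obtained by applying the hyperbolic tangent componentwise. -/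
/-!
Completing the square, `(v + 2 tanh e)ᵀ M (v + 2 tanh e) ≥ 0` bounds the `M`-terms below by
`-tanh(e)ᵀ M tanh(e) ≥ -λ_M ‖tanh e‖² ≥ -λ_M ‖e‖²`, the last step because `tanh` is 1-Lipschitz
and vanishes at `0`.
-/

open Matrix

namespace Real

theorem hasDerivAt_tanh (x : ℝ) : HasDerivAt tanh (1 / cosh x ^ 2) x := by
  have h := (hasDerivAt_sinh x).div (hasDerivAt_cosh x) (cosh_pos x).ne'
  rw [show cosh x * cosh x - sinh x * sinh x = 1 by linear_combination cosh_sq_sub_sinh_sq x] at h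
  rwa [show tanh = sinh / cosh from funext tanh_eq_sinh_div_cosh]

theorem lipschitzWith_tanh : LipschitzWith 1 tanh :=
  lipschitzWith_of_nnnorm_deriv_le (fun x => (hasDerivAt_tanh x).differentiableAt) fun x => by
    rw [(hasDerivAt_tanh x).deriv, ← NNReal.coe_le_coe, coe_nnnorm, norm_eq_abs, NNReal.coe_one,
      abs_of_pos (by positivity)]
    exact div_le_one_of_le₀ (one_le_pow₀ (one_le_cosh x)) (by positivity)

theorem abs_tanh_le_abs (x : ℝ) : |tanh x| ≤ |x| := by
  simpa using lipschitzWith_tanh.dist_le_mul x 0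

end Real

theorem Matrix.IsSymm.dotProduct_mulVec_comm {n R : Type*} [Fintype n] [CommSemiring R]
    {A : Matrix n n R} (hA : A.IsSymm) (x y : n → R) : x ⬝ᵥ A *ᵥ y = y ⬝ᵥ A *ᵥ x := by
  rw [dotProduct_mulVec, ← mulVec_transpose, hA.eq, dotProduct_comm]

theorem Matrix.IsSymm.neg_dotProduct_mulVec_self_le {n R : Type*} [Fintype n] [Field R]
    [LinearOrder R] [IsStrictOrderedRing R] {A : Matrix n n R} (hA : A.IsSymm)
    (hA₀ : ∀ w, 0 ≤ w ⬝ᵥ A *ᵥ w) (v x : n → R) :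
    -(x ⬝ᵥ A *ᵥ x) ≤ 1 / 4 * (v ⬝ᵥ A *ᵥ v) + v ⬝ᵥ A *ᵥ x := by
  have h := hA₀ (v + (2 : R) • x)
  simp only [mulVec_add, mulVec_smul, dotProduct_add, add_dotProduct, smul_dotProduct,
    dotProduct_smul, smul_eq_mul, hA.dotProduct_mulVec_comm x v] at h
  linarith

theorem stmt_15_general (m : ℕ) (M K : Matrix (Fin m) (Fin m) ℝ)
    (lM lK : ℝ) (hlM : 0 ≤ lM)
    (hMsymm : M.IsSymm) (hMpsd : ∀ v : Fin m → ℝ, 0 ≤ v ⬝ᵥ M.mulVec v)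
    (hMub : ∀ v : Fin m → ℝ, v ⬝ᵥ M.mulVec v ≤ lM * ∑ i, v i ^ 2)
    (hKlb : ∀ e : Fin m → ℝ, lK * ∑ i, e i ^ 2 ≤ e ⬝ᵥ K.mulVec e) :
    ∀ e v : Fin m → ℝ,
      (1 / 4) * (v ⬝ᵥ M.mulVec v) + v ⬝ᵥ M.mulVec (fun i => Real.tanh (e i))
          + (1 / 2) * (e ⬝ᵥ K.mulVec e)
        ≥ (1 / 2) * (lK - 2 * lM) * ∑ i, e i ^ 2 := by
  intro e v
  set t : Fin m → ℝ := fun i => Real.tanh (e i)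
  have ht : ∑ i, t i ^ 2 ≤ ∑ i, e i ^ 2 :=
    Finset.sum_le_sum fun i _ => sq_le_sq.mpr (Real.abs_tanh_le_abs (e i))
  have hMt : t ⬝ᵥ M *ᵥ t ≤ lM * ∑ i, e i ^ 2 :=
    (hMub t).trans (mul_le_mul_of_nonneg_left ht hlM)
  linarith [hMsymm.neg_dotProduct_mulVec_self_le hMpsd v t, hKlb e]

/-- Positive-definiteness bound for the Lyapunov function candidate (4.0): for a symmetric
positive-semidefinite `M` with `vᵀMv ≤ λ_M ‖v‖₂²` and a symmetric `K` with
`eᵀKe ≥ λ_K ‖e‖₂²`, one has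
`(1/4) vᵀMv + vᵀM tanh(e) + (1/2) eᵀKe ≥ (1/2)(λ_K − 2λ_M) ‖e‖₂²`,
where `tanh` is applied componentwise. -/
theorem stmt_15 (m : ℕ) (hm : 1 ≤ m) (M K : Matrix (Fin m) (Fin m) ℝ)
    (lM lK : ℝ) (hlM : 0 ≤ lM)
    (hMsymm : M.IsSymm) (hMpsd : ∀ v : Fin m → ℝ, 0 ≤ v ⬝ᵥ M.mulVec v)
    (hMub : ∀ v : Fin m → ℝ, v ⬝ᵥ M.mulVec v ≤ lM * ∑ i, v i ^ 2)
    (hKsymm : K.IsSymm)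
    (hKlb : ∀ e : Fin m → ℝ, lK * ∑ i, e i ^ 2 ≤ e ⬝ᵥ K.mulVec e) :
    ∀ e v : Fin m → ℝ,
      (1 / 4) * (v ⬝ᵥ M.mulVec v) + v ⬝ᵥ M.mulVec (fun i => Real.tanh (e i))
          + (1 / 2) * (e ⬝ᵥ K.mulVec e)
        ≥ (1 / 2) * (lK - 2 * lM) * ∑ i, e i ^ 2 :=
  stmt_15_general m M K lM lK hlM hMsymm hMpsd hMub hKlb
end

section
/- Let n, m ≥ 1, let D be an n×n real matrix, and let β, h ∈ ℝ with h > 0 be such that every root s ∈ ℂ of the characteristic polynomial of D satisfies s ≠ 1 and 0 < β < 2(1 − Re(s))/|1 − s|². Let γ₂ ≥ 0 and let υ₀, a₀ : ℝ → ℝᵐ satisfy: υ₀ is differentiable with derivative a₀ and ‖a₀(t)‖_∞ ≤ γ₂ for all t. Fix t₀ ∈ ℝ and set t_k = t₀ + kh. Then there exists a constant C > 0, depending only on n, D, and β, such that for every sequence ῡ : ℕ → (ℝᵐ)ⁿ satisfying, for all k ≥ 1 and all i ∈ {1, …, n}, ῡ_i(k+1) = Σ_j [(1−β)I + βD]_{ij}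 ῡ_j(k) + υ₀(t_k) − υ₀(t_{k+1}), one has limsup_{k→∞} max_i ‖ῡ_i(k)‖_∞ ≤ C·h·γ₂. -/
open Filter Topology
open scoped Matrix.Norms.Operator NNReal

/-! The eigenvalues of `𝒫 = (1 - β) • 1 + β • D` are `1 - β (1 - s)` for the eigenvalues `s` of `D`,
and the gain condition says exactly that `|1 - β (1 - s)| < 1`. By Gelfand's formula the powers of
`𝒫` are then summable in operator norm. Unrolling `ῡ (k + 1) = 𝒫 ῡ k + w k`, where
`‖w k‖ ≤ h γ₂` by the mean value theorem, gives
`‖ῡ (k + 1)‖ ≤ ‖𝒫 ^ k‖ ‖ῡ 1‖ + (∑ j, ‖𝒫 ^ j‖) h γ₂`, and `‖𝒫 ^ k‖ → 0`,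
so `C = ∑ j, ‖𝒫 ^ j‖` works. -/

theorem Complex.norm_one_sub_ofReal_mul_lt_one {z : ℂ} {β : ℝ} (hz : z ≠ 0) (hβ : 0 < β)
    (hlt : β < 2 * z.re / ‖z‖ ^ 2) : ‖1 - β * z‖ < 1 := by
  have hβz : β * ‖z‖ ^ 2 < 2 * z.re := (lt_div_iff₀ (by positivity)).mp hlt
  have hsq : ‖1 - β * z‖ ^ 2 = 1 - β * (2 * z.re - β * ‖z‖ ^ 2) := by
    simp only [Complex.sq_norm, Complex.normSq_apply, Complex.sub_re, Complex.sub_im,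
      Complex.one_re, Complex.one_im, Complex.re_ofReal_mul, Complex.im_ofReal_mul]
    ring
  have : ‖1 - β * z‖ ^ 2 < 1 := by rw [hsq]; nlinarith
  exact (sq_lt_one_iff₀ (norm_nonneg _)).mp this

theorem spectrum.summable_norm_pow_of_spectralRadius_lt_one {A : Type*} [NormedRing A]
    [NormedAlgebra ℂ A] [CompleteSpace A] {a : A} (ha : spectralRadius ℂ a < 1) :
    Summable fun k => ‖a ^ k‖ := by
  obtain ⟨r, hr, hr1⟩ := ENNReal.lt_iff_exists_nnreal_btwn.mp ha
  have hroot : ∀ᶠ k : ℕ in atTop, ENNReal.ofReal (‖a ^ k‖ ^ (1 / k : ℝ)) < r :=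
    (spectrum.pow_norm_pow_one_div_tendsto_nhds_spectralRadius a).eventually_lt_const hr
  refine Summable.of_norm_bounded_eventually_nat (g := fun k => (r : ℝ) ^ k)
    (summable_geometric_of_lt_one r.coe_nonneg (by exact_mod_cast hr1)) ?_
  filter_upwards [hroot, eventually_ge_atTop 1] with k hk hk1
  rw [norm_norm]
  have hk' : ‖a ^ k‖ ^ (1 / k : ℝ) < r := by
    rwa [ENNReal.ofReal_lt_iff_lt_toReal (by positivity) ENNReal.coe_ne_top] at hk
  calc ‖a ^ k‖ = (‖a ^ k‖ ^ (1 / k : ℝ)) ^ k := by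
        rw [← Real.rpow_natCast, ← Real.rpow_mul (norm_nonneg _),
          one_div_mul_cancel (by positivity), Real.rpow_one]
    _ ≤ (r : ℝ) ^ k := pow_le_pow_left₀ (by positivity) hk'.le k

theorem Matrix.linfty_opNorm_map_ofReal {m n : Type*} [Fintype m] [Fintype n]
    (A : Matrix m n ℝ) : ‖A.map ((↑) : ℝ → ℂ)‖ = ‖A‖ := by
  simp [Matrix.linfty_opNorm_def]

theorem Matrix.summable_norm_pow_of_forall_mem_spectrum {n : Type*} [Fintype n] [DecidableEq n]
    [Nonempty n] (A : Matrix n n ℝ)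
    (hA : ∀ μ ∈ spectrum ℂ (A.map ((↑) : ℝ → ℂ)), ‖μ‖ < 1) :
    Summable fun k => ‖A ^ k‖ := by
  have hrad : spectralRadius ℂ (A.map ((↑) : ℝ → ℂ)) < 1 := by
    exact_mod_cast spectrum.spectralRadius_lt_of_forall_lt _ (r := 1) fun μ hμ => by
      exact_mod_cast hA μ hμ
  convert spectrum.summable_norm_pow_of_spectralRadius_lt_one hrad using 2 with k
  rw [← Matrix.linfty_opNorm_map_ofReal]
  exact congrArg norm (map_pow Complex.ofRealHom.mapMatrix A k)

theorem Matrix.sum_norm_apply_le_linfty_opNorm {m n α : Type*} [Fintype m] [Fintype n]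
    [SeminormedAddCommGroup α] (A : Matrix m n α) (i : m) : ∑ j, ‖A i j‖ ≤ ‖A‖ := by
  calc ∑ j, ‖A i j‖ = ((∑ j, ‖A i j‖₊ : ℝ≥0) : ℝ) := by push_cast; rfl
    _ ≤ ‖A‖ := by
      rw [Matrix.linfty_opNorm_def]
      exact_mod_cast Finset.le_sup (f := fun i => ∑ j, ‖A i j‖₊) (Finset.mem_univ i)

namespace Matrix

variable {ι V : Type*} [Fintype ι] [DecidableEq ι] [SeminormedAddCommGroup V] [NormedSpace ℝ V]

def mulVecCLM : Matrix ι ι ℝ →* ((ι → V) →L[ℝ] (ι → V)) where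
  toFun A := ContinuousLinearMap.pi fun i => ∑ j, A i j • ContinuousLinearMap.proj j
  map_one' := by
    ext w i
    simp [Matrix.one_apply]
  map_mul' A B := by
    ext w i
    simp [Matrix.mul_apply, Finset.sum_smul, Finset.smul_sum, mul_smul]
    exact Finset.sum_comm

@[simp]
theorem mulVecCLM_apply (A : Matrix ι ι ℝ) (w : ι → V) (i : ι) :
    mulVecCLM A w i = ∑ j, A i j • w j := by
  simp [mulVecCLM]

theorem norm_mulVecCLM_le (A : Matrix ι ι ℝ) :
    ‖(mulVecCLM A : (ι → V) →L[ℝ] (ι → V))‖ ≤ ‖A‖ := by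
  refine ContinuousLinearMap.opNorm_le_bound _ (norm_nonneg _) fun w =>
    (pi_norm_le_iff_of_nonneg (by positivity)).2 fun i => ?_
  calc ‖mulVecCLM A w i‖ ≤ ∑ j, ‖A i j‖ * ‖w‖ := by
        rw [mulVecCLM_apply]
        refine norm_sum_le_of_le _ fun j _ => ?_
        rw [norm_smul]
        gcongr
        exact norm_le_pi_norm w j
    _ = (∑ j, ‖A i j‖) * ‖w‖ := (Finset.sum_mul ..).symm
    _ ≤ ‖A‖ * ‖w‖ := by gcongr; exact sum_norm_apply_le_linfty_opNorm A i

end Matrix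

namespace ContinuousLinearMap

variable {E : Type*} [SeminormedAddCommGroup E] [NormedSpace ℝ E] (L : E →L[ℝ] E) {v w : ℕ → E}

theorem eq_pow_apply_add_sum_of_forall_succ_eq (hv : ∀ k, v (k + 1) = L (v k) + w k) (k : ℕ) :
    v k = (L ^ k) (v 0) + ∑ i ∈ Finset.range k, (L ^ i) (w (k - 1 - i)) := by
  induction k with
  | zero => simp
  | succ k ih =>
    rw [hv, ih, map_add, map_sum, Finset.sum_range_succ', pow_succ', mul_apply_eq_comp, add_assoc]
    congr 2
    refine Finset.sum_congr rfl fun i _ => ?_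
    rw [pow_succ', mul_apply_eq_comp, show k + 1 - 1 - (i + 1) = k - 1 - i by omega]

theorem norm_le_of_forall_succ_eq (hv : ∀ k, v (k + 1) = L (v k) + w k) {c : ℝ}
    (hw : ∀ k, ‖w k‖ ≤ c) (hL : Summable fun k => ‖L ^ k‖) (k : ℕ) :
    ‖v k‖ ≤ ‖L ^ k‖ * ‖v 0‖ + (∑' i, ‖L ^ i‖) * c := by
  have hc : 0 ≤ c := (norm_nonneg _).trans (hw 0)
  rw [L.eq_pow_apply_add_sum_of_forall_succ_eq hv k]
  refine (norm_add_le _ _).trans (add_le_add (le_opNorm _ _) ?_)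
  calc ‖∑ i ∈ Finset.range k, (L ^ i) (w (k - 1 - i))‖
      ≤ ∑ i ∈ Finset.range k, ‖L ^ i‖ * c :=
        norm_sum_le_of_le _ fun i _ => (le_opNorm _ _).trans (by gcongr; exact hw _)
    _ = (∑ i ∈ Finset.range k, ‖L ^ i‖) * c := (Finset.sum_mul ..).symm
    _ ≤ (∑' i, ‖L ^ i‖) * c := by gcongr; exact hL.sum_le_tsum _ fun i _ => norm_nonneg _

theorem limsup_norm_le_of_forall_succ_eq (hv : ∀ k, v (k + 1) = L (v k) + w k) {c : ℝ}
    (hw : ∀ k, ‖w k‖ ≤ c) (hL : Summable fun k => ‖L ^ k‖) :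
    limsup (fun k => ‖v k‖) atTop ≤ (∑' i, ‖L ^ i‖) * c := by
  have hbound : Tendsto (fun k => ‖L ^ k‖ * ‖v 0‖ + (∑' i, ‖L ^ i‖) * c) atTop
      (𝓝 ((∑' i, ‖L ^ i‖) * c)) := by
    simpa using (hL.tendsto_atTop_zero.mul_const ‖v 0‖).add_const ((∑' i, ‖L ^ i‖) * c)
  calc limsup (fun k => ‖v k‖) atTop
      ≤ limsup (fun k => ‖L ^ k‖ * ‖v 0‖ + (∑' i, ‖L ^ i‖) * c) atTop :=
        limsup_le_limsup (.of_forall (L.norm_le_of_forall_succ_eq hv hw hL))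
          (isCoboundedUnder_le_of_le atTop fun k => norm_nonneg _) hbound.isBoundedUnder_le
    _ = (∑' i, ‖L ^ i‖) * c := hbound.limsup_eq

end ContinuousLinearMap

theorem Matrix.summable_norm_pow_one_sub_smul_add_smul {n : Type*} [Fintype n] [DecidableEq n]
    [Nonempty n] (D : Matrix n n ℝ) {β : ℝ}
    (heig : ∀ s ∈ (D.map ((↑) : ℝ → ℂ)).charpoly.roots,
      s ≠ 1 ∧ 0 < β ∧ β < 2 * (1 - s.re) / ‖1 - s‖ ^ 2) :
    Summable fun k => ‖((1 - β) • (1 : Matrix n n ℝ) + β • D) ^ k‖ := by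
  refine summable_norm_pow_of_forall_mem_spectrum _ fun μ hμ => ?_
  have hmap : ((1 - β) • (1 : Matrix n n ℝ) + β • D).map ((↑) : ℝ → ℂ) =
      Polynomial.aeval (D.map ((↑) : ℝ → ℂ)) (.C (1 - β : ℂ) + .C (β : ℂ) * .X) := by
    ext i j
    simp [Matrix.one_apply, Algebra.algebraMap_eq_smul_one]
    split_ifs <;> push_cast <;> ring
  rw [hmap, spectrum.map_polynomial_aeval] at hμ
  obtain ⟨s, hs, rfl⟩ := hμ
  have hroot : s ∈ (D.map ((↑) : ℝ → ℂ)).charpoly.roots :=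
    (Polynomial.mem_roots (charpoly_monic _).ne_zero).2 (mem_spectrum_iff_isRoot_charpoly.1 hs)
  obtain ⟨hs1, hβ, hlt⟩ := heig s hroot
  convert Complex.norm_one_sub_ofReal_mul_lt_one (sub_ne_zero.2 hs1.symm) hβ (by simpa using hlt)
    using 2
  simp
  ring

theorem stmt_17_general (n m : ℕ) (hn : 1 ≤ n)
    (D : Matrix (Fin n) (Fin n) ℝ) (β : ℝ)
    (heig : ∀ s ∈ (D.map (fun x => (x : ℂ))).charpoly.roots,
      s ≠ 1 ∧ 0 < β ∧ β < 2 * (1 - s.re) / ‖1 - s‖ ^ 2) :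
    ∃ C > 0, ∀ (h : ℝ), 0 < h → ∀ (γ₂ : ℝ), 0 ≤ γ₂ →
      ∀ (υ₀ a₀ : ℝ → Fin m → ℝ),
        (∀ t, HasDerivAt υ₀ (a₀ t) t) → (∀ t, ‖a₀ t‖ ≤ γ₂) →
      ∀ (t₀ : ℝ) (t : ℕ → ℝ), (∀ k, t k = t₀ + k * h) →
      ∀ (υb : ℕ → Fin n → Fin m → ℝ),
        (∀ k, 1 ≤ k → ∀ i, υb (k + 1) i =
          (∑ j, (((1 - β) • (1 : Matrix (Fin n) (Fin n) ℝ) + β • D) i j) • υb k j)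
            + (υ₀ (t k) - υ₀ (t (k + 1)))) →
        Filter.limsup (fun k => ‖υb k‖) Filter.atTop ≤ C * h * γ₂ := by
  have : Nonempty (Fin n) := ⟨⟨0, hn⟩⟩
  set P : Matrix (Fin n) (Fin n) ℝ := (1 - β) • 1 + β • D
  have hP : Summable fun k => ‖P ^ k‖ := D.summable_norm_pow_one_sub_smul_add_smul heig
  refine ⟨∑' k, ‖P ^ k‖, ?_, fun h hh γ₂ hγ₂ υ₀ a₀ hυ₀ ha₀ t₀ t ht υb hυb => ?_⟩
  · calc (0 : ℝ) < ‖P ^ 0‖ := by simp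
      _ ≤ ∑' k, ‖P ^ k‖ := hP.le_tsum 0 fun k _ => norm_nonneg _
  set L : (Fin n → Fin m → ℝ) →L[ℝ] (Fin n → Fin m → ℝ) := Matrix.mulVecCLM P
  have hL : ∀ k, ‖L ^ k‖ ≤ ‖P ^ k‖ := fun k => by
    rw [← map_pow]
    exact Matrix.norm_mulVecCLM_le _
  have hLs : Summable fun k => ‖L ^ k‖ := hP.of_nonneg_of_le (fun k => norm_nonneg _) hL
  have hstep : ∀ k, ‖υ₀ (t (k + 1)) - υ₀ (t k)‖ ≤ γ₂ * h := fun k => by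
    have hdt : ‖t (k + 1) - t k‖ = h := by
      rw [ht, ht, Nat.cast_succ, show t₀ + (k + 1) * h - (t₀ + k * h) = h by ring,
        Real.norm_of_nonneg hh.le]
    simpa [hdt] using Convex.norm_image_sub_le_of_norm_hasDerivWithin_le
      (fun x _ => (hυ₀ x).hasDerivWithinAt) (fun x _ => ha₀ x) convex_univ
      (Set.mem_univ (t k)) (Set.mem_univ (t (k + 1)))
  have hrec : ∀ k, υb (k + 1 + 1) =
      L (υb (k + 1)) + fun _ => υ₀ (t (k + 1)) - υ₀ (t (k + 1 + 1)) :=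
    fun k => funext fun i => by simp [L, hυb (k + 1) le_add_self i]
  calc limsup (fun k => ‖υb k‖) atTop = limsup (fun k => ‖υb (k + 1)‖) atTop :=
        (limsup_nat_add _ 1).symm
    _ ≤ (∑' k, ‖L ^ k‖) * (γ₂ * h) :=
        L.limsup_norm_le_of_forall_succ_eq hrec
          (fun k => (pi_norm_le_iff_of_nonneg (by positivity)).2 fun _ => by
            rw [norm_sub_rev]; exact hstep _)
          hLs
    _ ≤ (∑' k, ‖P ^ k‖) * (γ₂ * h) := by gcongr; exact hL _
    _ = (∑' k, ‖P ^ k‖) * h * γ₂ := by ring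

/-- Refined velocity bound in the proof of Theorem 1: under the gain condition
`0 < β < 2(1 − Re s)/|1 − s|²` on the eigenvalues of `D`, there is a constant `C > 0`
depending only on `n`, `D` and `β` such that for every sampling period `h > 0`, every
target velocity with `‖a₀‖_∞ ≤ γ₂`, and every solution of the velocity-error recursion
governed by `𝒫 = (1 − β)I + βD`, `limsup_k max_i ‖ῡ_i(k)‖_∞ ≤ C h γ₂`.
(Norms on `Fin m → ℝ` and `Fin n → Fin m → ℝ` are sup norms.) -/
theorem stmt_17 (n m : ℕ) (hn : 1 ≤ n) (hm : 1 ≤ m)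
    (D : Matrix (Fin n) (Fin n) ℝ) (β : ℝ)
    (heig : ∀ s ∈ (D.map (fun x => (x : ℂ))).charpoly.roots,
      s ≠ 1 ∧ 0 < β ∧ β < 2 * (1 - s.re) / ‖1 - s‖ ^ 2) :
    ∃ C > 0, ∀ (h : ℝ), 0 < h → ∀ (γ₂ : ℝ), 0 ≤ γ₂ →
      ∀ (υ₀ a₀ : ℝ → Fin m → ℝ),
        (∀ t, HasDerivAt υ₀ (a₀ t) t) → (∀ t, ‖a₀ t‖ ≤ γ₂) →
      ∀ (t₀ : ℝ) (t : ℕ → ℝ), (∀ k, t k = t₀ + k * h) →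
      ∀ (υb : ℕ → Fin n → Fin m → ℝ),
        (∀ k, 1 ≤ k → ∀ i, υb (k + 1) i =
          (∑ j, (((1 - β) • (1 : Matrix (Fin n) (Fin n) ℝ) + β • D) i j) • υb k j)
            + (υ₀ (t k) - υ₀ (t (k + 1)))) →
        Filter.limsup (fun k => ‖υb k‖) Filter.atTop ≤ C * h * γ₂ :=
  stmt_17_general n m hn D β heig
end
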